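/- Let Ω ⊆ ℂ^n be a bounded open set, let μ be a Borel measure on Ω that is absolutely continuous with respect to Lebesgue measure and whose Radon–Nikodym density is bounded below by a positive constant on every compact subset of Ω, and let φ : Ω → ℝ be measurable and locally bounded. Let (Ω_j)_{j ≥ 1} be a nondecreasing family of open subsets of Ω with ⋃_j Ω_j = Ω. Fix z ∈ Ω₁, let K_j be the diagonal Bergman kernel of H²(Ω_j, μ|_{Ω_j}, φ|_{Ω_j}) and K the diagonal Bergman kernel of H²(Ω,μ,φ). Then the sequence (K_j(z))_j is nonincreasing and K_j(z) → K(z) as j → ∞. -/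

import Mathlib

open MeasureTheory Set
open scoped ENNReal ComplexOrder

noncomputable section

/-- The squared weighted `L²` norm `∫_Ω ‖f‖² e^{−φ} dμ`. -/
def bergNormSq {n : ℕ} (Ω : Set (Fin n → ℂ)) (φ : (Fin n → ℂ) → ℝ)
    (μ : Measure (Fin n → ℂ)) (f : (Fin n → ℂ) → ℂ) : ℝ≥0∞ :=
  ∫⁻ z in Ω, ENNReal.ofReal (‖f z‖ ^ 2 * Real.exp (-(φ z))) ∂μ

/-- The diagonal Bergman kernel of the weighted Bergman space `H²(Ω,μ,φ)`. -/
def bergKernel {n : ℕ} (Ω : Set (Fin n → ℂ)) (φ : (Fin n → ℂ) → ℝ)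
    (μ : Measure (Fin n → ℂ)) (z : Fin n → ℂ) : ℝ≥0∞ :=
  ⨆ (f : (Fin n → ℂ) → ℂ) (_ : DifferentiableOn ℂ f Ω)
    (_ : bergNormSq Ω φ μ f ≠ 0) (_ : bergNormSq Ω φ μ f ≠ ⊤),
    ENNReal.ofReal (‖f z‖ ^ 2) / bergNormSq Ω φ μ f

/-- Extended logarithm `ℝ≥0∞ → EReal`, with `elog 0 = ⊥`. -/
def elog (x : ℝ≥0∞) : EReal :=
  if x = 0 then ⊥ else if x = ⊤ then ⊤ else ((Real.log x.toReal : ℝ) : EReal)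

/-- Directional Wirtinger derivative `∂_v f` at `x`. -/
def wder {E : Type*} [NormedAddCommGroup E] [NormedSpace ℂ E]
    (f : E → ℂ) (v x : E) : ℂ :=
  (1 / 2 : ℂ) * (fderiv ℝ f x v - Complex.I * fderiv ℝ f x (Complex.I • v))

/-- Directional conjugate Wirtinger derivative `∂̄_v f` at `x`. -/
def wderBar {E : Type*} [NormedAddCommGroup E] [NormedSpace ℂ E]
    (f : E → ℂ) (v x : E) : ℂ :=
  (1 / 2 : ℂ) * (fderiv ℝ f x v + Complex.I * fderiv ℝ f x (Complex.I • v))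

/-- The complex Hessian (Levi form) of `u` is positive semidefinite on `W`. -/
def LeviPSD {E : Type*} [NormedAddCommGroup E] [NormedSpace ℂ E]
    (W : Set E) (u : E → ℝ) : Prop :=
  ∀ x ∈ W, ∀ v : E, 0 ≤ (wder (fun y => wderBar (fun q => (u q : ℂ)) v y) v x).re

/-- Pseudoconvexity of an open set via a smooth psh exhaustion function. -/
def Pseudoconvex {n : ℕ} (Ω : Set (Fin n → ℂ)) : Prop :=
  IsOpen Ω ∧ ∃ u : (Fin n → ℂ) → ℝ, ContDiffOn ℝ (⊤ : ℕ∞) u Ω ∧ LeviPSD Ω u ∧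
    ∀ c : ℝ, IsCompact {z ∈ Ω | u z ≤ c}

/-- Plurisubharmonicity (with values in `EReal`): upper semicontinuity plus the
sub-mean-value inequality on complex lines, expressed via continuous majorants. -/
def PshOn {E : Type*} [NormedAddCommGroup E] [NormedSpace ℂ E]
    (D : Set E) (u : E → EReal) : Prop :=
  UpperSemicontinuousOn u D ∧
  ∀ a ∈ D, ∀ w : E, ∀ r : ℝ, 0 < r →
    (∀ τ : ℂ, ‖τ‖ ≤ r → a + τ • w ∈ D) →
    ∀ g : ℝ → ℝ, Continuous g →
      (∀ θ : ℝ, u (a + (((r : ℂ) * Complex.exp (θ * Complex.I)) • w)) ≤ ((g θ : ℝ) : EReal)) →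
      u a ≤ (((1 / (2 * Real.pi)) * ∫ θ in (0:ℝ)..(2 * Real.pi), g θ : ℝ) : EReal)

/-- The twisted curvature positivity condition `Ξ_{δ,η}(e^{−φ}) ≥ 0` on `U × Ω`. -/
def XiNonneg {m n : ℕ} (U : Set (Fin m → ℂ)) (Ω : Set (Fin n → ℂ))
    (φ : (Fin m → ℂ) × (Fin n → ℂ) → ℝ) (η : (Fin n → ℂ) → ℝ) (δ : ℝ) : Prop :=
  ∀ p ∈ U ×ˢ Ω, ∀ vt : Fin m → ℂ, ∀ vz : Fin n → ℂ,
    0 ≤ (wder (fun y => wderBar (fun q => (φ q : ℂ))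
            ((vt, 0) : (Fin m → ℂ) × (Fin n → ℂ)) y) ((vt, 0)) p
      + wder (fun y => wderBar (fun q => (φ q : ℂ))
            (((0 : Fin m → ℂ), vz)) y) ((vt, 0)) p
      + wder (fun y => wderBar (fun q => (φ q : ℂ))
            ((vt, 0)) y) (((0 : Fin m → ℂ), vz)) p
      + ((δ / (1 + δ) : ℝ) : ℂ) *
        (wder (fun y => wderBar (fun q => (φ q : ℂ))
            (((0 : Fin m → ℂ), vz)) y) (((0 : Fin m → ℂ), vz)) p
          + 2 * wder (fun y => wderBar (fun w => (η w : ℂ)) vz y) vz p.2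
          - ((1 + δ : ℝ) : ℂ) * (Complex.normSq (wder (fun w => (η w : ℂ)) vz p.2) : ℂ))).re

section RamadanovAux

open scoped Real


lemma circleAvg_eq {f : ℂ → ℂ} {c : ℂ} {R : ℝ} (hR : 0 < R)
    (hf : DiffContOnCl ℂ f (Metric.ball c R)) :
    (∫ θ in (0:ℝ)..(2*π), f (circleMap c R θ)) = (2*π : ℝ) • f c := by
  have h := hf.circleIntegral_sub_inv_smul (Metric.mem_ball_self hR)
  have h2 : (∮ z in C(c, R), (z - c)⁻¹ • f z)
      = ∫ θ in (0:ℝ)..(2*π), Complex.I • f (circleMap c R θ) := by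
    unfold circleIntegral
    refine intervalIntegral.integral_congr fun θ _ => ?_
    have hne : circleMap 0 R θ ≠ 0 := by
      intro h0
      exact hR.ne' (circleMap_eq_center_iff.mp h0)
    simp only [deriv_circleMap, circleMap_sub_center, smul_eq_mul]
    field_simp
  rw [h2, intervalIntegral.integral_smul] at h
  have h3 : Complex.I • ((2*π:ℝ) • f c)
      = Complex.I • (∫ θ in (0:ℝ)..(2*π), f (circleMap c R θ)) := by
    rw [h]
    rw [smul_eq_mul, smul_eq_mul, Complex.real_smul]
    push_cast
    ring
  exact (smul_right_injective ℂ Complex.I_ne_zero h3).symm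

lemma disc_avg_eq {g : ℂ → ℂ} {s : Set ℂ} (hs : IsOpen s) (hg : DifferentiableOn ℂ g s)
    {c : ℂ} {r : ℝ} (hr : 0 < r) (hsub : Metric.closedBall c r ⊆ s) :
    ∫ x in Metric.ball c r, g x = (π * r^2 : ℝ) • g c := by
  have hgc : ContinuousOn g s := hg.continuousOn
  set G : ℂ → ℂ := (Metric.ball (0:ℂ) r).indicator (fun x => g (c + x)) with hG
  have hmem : ∀ p : ℂ, (c + p ∈ Metric.ball c r) ↔ p ∈ Metric.ball (0:ℂ) r := by
    intro p; simp [Metric.mem_ball, dist_eq_norm]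
  have h1 : ∫ x in Metric.ball c r, g x = ∫ p, G p := by
    rw [← MeasureTheory.integral_indicator measurableSet_ball]
    rw [← MeasureTheory.integral_add_left_eq_self ((Metric.ball c r).indicator g) c]
    congr 1; funext p
    by_cases hp : p ∈ Metric.ball (0:ℂ) r
    · rw [hG, Set.indicator_of_mem hp, Set.indicator_of_mem ((hmem p).mpr hp)]
    · rw [hG, Set.indicator_of_notMem hp,
        Set.indicator_of_notMem (fun h => hp ((hmem p).mp h))]
  set S' : Set (ℝ × ℝ) := Ioo (0:ℝ) r ×ˢ Ioo (-π) π with hS'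
  have hS'sub : S' ⊆ polarCoord.target := by
    rw [polarCoord_target]
    exact Set.prod_mono Ioo_subset_Ioi_self le_rfl
  have h2 : ∫ p, G p = ∫ p in S', p.1 • g (c + Complex.polarCoord.symm p) := by
    rw [← Complex.integral_comp_polarCoord_symm G]
    rw [MeasureTheory.setIntegral_eq_of_subset_of_forall_diff_eq_zero
      polarCoord.open_target.measurableSet hS'sub ?_]
    · refine setIntegral_congr_fun (measurableSet_Ioo.prod measurableSet_Ioo) fun p hp => ?_
      have hmemb : Complex.polarCoord.symm p ∈ Metric.ball (0:ℂ) r := by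
        rw [Metric.mem_ball, dist_zero_right, Complex.norm_polarCoord_symm,
          abs_of_pos hp.1.1]
        exact hp.1.2
      rw [hG, Set.indicator_of_mem hmemb]
    · intro p hp
      have hp1 : r ≤ p.1 := by
        rcases hp with ⟨hpt, hps⟩
        rw [polarCoord_target] at hpt
        by_contra hlt
        push_neg at hlt
        exact hps ⟨⟨hpt.1, hlt⟩, hpt.2⟩
      have : Complex.polarCoord.symm p ∉ Metric.ball (0:ℂ) r := by
        rw [Metric.mem_ball, dist_zero_right, Complex.norm_polarCoord_symm]
        exact not_lt.mpr (le_trans hp1 (le_abs_self _))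
      rw [hG, Set.indicator_of_notMem this, smul_zero]
  -- Fubini
  have hsymmc : Continuous (fun p : ℝ × ℝ => Complex.polarCoord.symm p) := by
    simp only [Complex.polarCoord_symm_apply]
    fun_prop
  have hKc : IsCompact (Icc (0:ℝ) r ×ˢ Icc (-π) π) := isCompact_Icc.prod isCompact_Icc
  have hmaps : ∀ p : ℝ × ℝ, p ∈ Icc (0:ℝ) r ×ˢ Icc (-π) π →
      c + Complex.polarCoord.symm p ∈ s := by
    intro p hp
    apply hsub
    rw [Metric.mem_closedBall, dist_eq_norm, add_sub_cancel_left,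
      Complex.norm_polarCoord_symm, abs_of_nonneg hp.1.1]
    exact hp.1.2
  have hFcont : ContinuousOn (fun p : ℝ × ℝ => p.1 • g (c + Complex.polarCoord.symm p))
      (Icc (0:ℝ) r ×ˢ Icc (-π) π) := by
    refine ContinuousOn.smul continuous_fst.continuousOn ?_
    exact hgc.comp (continuous_const.add hsymmc).continuousOn hmaps
  have hInt : IntegrableOn (fun p : ℝ × ℝ => p.1 • g (c + Complex.polarCoord.symm p)) S' := by
    refine (hFcont.integrableOn_compact hKc).mono_set ?_
    exact Set.prod_mono Ioo_subset_Icc_self Ioo_subset_Icc_self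
  have h3 : ∫ p in S', p.1 • g (c + Complex.polarCoord.symm p)
      = ∫ ρ in Ioo (0:ℝ) r, (∫ θ in Ioo (-π) π,
          ρ • g (c + Complex.polarCoord.symm (ρ, θ))) := by
    rw [hS']
    rw [show (volume : Measure (ℝ × ℝ)) = (volume : Measure ℝ).prod volume from Measure.volume_eq_prod ℝ ℝ]
    rw [← Measure.prod_restrict]
    refine MeasureTheory.integral_prod _ ?_
    rw [Measure.prod_restrict]
    rw [show (volume : Measure ℝ).prod volume = (volume : Measure (ℝ × ℝ)) from (Measure.volume_eq_prod ℝ ℝ).symm]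
    exact hInt
  have h4 : ∀ ρ ∈ Ioo (0:ℝ) r, (∫ θ in Ioo (-π) π,
      ρ • g (c + Complex.polarCoord.symm (ρ, θ))) = (2*π*ρ : ℝ) • g c := by
    intro ρ hρ
    have hcirc : ∀ θ : ℝ, c + Complex.polarCoord.symm (ρ, θ) = circleMap c ρ θ := by
      intro θ
      rw [Complex.polarCoord_symm_apply, circleMap, Complex.exp_mul_I]
      push_cast
      ring
    calc (∫ θ in Ioo (-π) π, ρ • g (c + Complex.polarCoord.symm (ρ, θ)))
        = ρ • ∫ θ in Ioo (-π) π, g (circleMap c ρ θ) := by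
          rw [← integral_smul]
          exact setIntegral_congr_fun measurableSet_Ioo fun θ _ => by rw [hcirc]
      _ = ρ • ∫ θ in (-π)..π, g (circleMap c ρ θ) := by
          rw [intervalIntegral.integral_of_le (by linarith [Real.pi_pos]),
            integral_Ioc_eq_integral_Ioo]
      _ = ρ • ∫ θ in (0:ℝ)..(2*π), g (circleMap c ρ θ) := by
          congr 1
          have hper : Function.Periodic (fun θ => g (circleMap c ρ θ)) (2*π) :=
            (periodic_circleMap c ρ).comp g
          have h := hper.intervalIntegral_add_eq (-π) 0
          rw [zero_add] at h
          rw [show -π + 2*π = π by ring] at h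
          exact h
      _ = ρ • ((2*π:ℝ) • g c) := by
          rw [circleAvg_eq hρ.1 ?_]
          refine DifferentiableOn.diffContOnCl (hg.mono ?_)
          refine subset_trans Metric.closure_ball_subset_closedBall ?_
          exact subset_trans (Metric.closedBall_subset_closedBall hρ.2.le) hsub
      _ = (2*π*ρ : ℝ) • g c := by rw [smul_smul]; ring_nf
  have h5 : ∫ ρ in Ioo (0:ℝ) r, (∫ θ in Ioo (-π) π,
      ρ • g (c + Complex.polarCoord.symm (ρ, θ))) = ∫ ρ in Ioo (0:ℝ) r, (2*π*ρ : ℝ) • g c :=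
    setIntegral_congr_fun measurableSet_Ioo h4
  have h6 : ∫ ρ in Ioo (0:ℝ) r, (2*π*ρ : ℝ) • g c = (π * r^2 : ℝ) • g c := by
    rw [integral_smul_const]
    congr 1
    rw [← integral_Ioc_eq_integral_Ioo, ← intervalIntegral.integral_of_le hr.le]
    rw [intervalIntegral.integral_const_mul, integral_id]
    ring
  rw [h1, h2, h3, h5, h6]

lemma disc_mvi_1d {g : ℂ → ℂ} {s : Set ℂ} (hs : IsOpen s) (hg : DifferentiableOn ℂ g s)
    {c : ℂ} {r : ℝ} (hr : 0 < r) (hsub : Metric.closedBall c r ⊆ s) :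
    ENNReal.ofReal ‖g c‖ * volume (Metric.ball c r)
      ≤ ∫⁻ x in Metric.ball c r, ENNReal.ofReal ‖g x‖ := by
  have hInt : IntegrableOn (fun x => ‖g x‖) (Metric.ball c r) volume := by
    refine (((hg.continuousOn.mono hsub).norm).integrableOn_compact
      (isCompact_closedBall c r)).mono_set Metric.ball_subset_closedBall
  have hreal : π * r^2 * ‖g c‖ ≤ ∫ x in Metric.ball c r, ‖g x‖ := by
    have h1 := disc_avg_eq hs hg hr hsub
    have h2 : ‖∫ x in Metric.ball c r, g x‖ ≤ ∫ x in Metric.ball c r, ‖g x‖ :=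
      MeasureTheory.norm_integral_le_integral_norm _
    rw [h1, norm_smul, Real.norm_eq_abs, abs_of_nonneg (by positivity)] at h2
    exact h2
  have hvol : volume (Metric.ball c r) = ENNReal.ofReal (π * r^2) := by
    rw [Complex.volume_ball, ENNReal.ofReal_mul Real.pi_pos.le, ENNReal.ofReal_pow hr.le,
      ← NNReal.coe_real_pi, ENNReal.ofReal_coe_nnreal]
    ring
  rw [hvol, ← ENNReal.ofReal_mul (norm_nonneg _),
    ← MeasureTheory.ofReal_integral_eq_lintegral_ofReal hInt
      (Filter.Eventually.of_forall fun x => norm_nonneg _)]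
  exact ENNReal.ofReal_le_ofReal (by rw [mul_comm] at hreal; exact hreal)




lemma pi_mvi : ∀ (n : ℕ) (f : (Fin n → ℂ) → ℂ) (s : Set (Fin n → ℂ)), IsOpen s →
    DifferentiableOn ℂ f s → ∀ (w : Fin n → ℂ) (r : ℝ), 0 < r → Metric.closedBall w r ⊆ s →
    ENNReal.ofReal ‖f w‖ * volume (Metric.ball w r)
      ≤ ∫⁻ x in Metric.ball w r, ENNReal.ofReal ‖f x‖ := by
  intro n
  induction n with
  | zero =>
    intro f s hs hf w r hr hsub
    have hball : Metric.ball w r = Set.univ := by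
      refine Set.eq_univ_iff_forall.mpr fun x => ?_
      rw [Metric.mem_ball, Subsingleton.elim x w, dist_self]
      exact hr
    have hfx : ∀ x : Fin 0 → ℂ, f x = f w := fun x => by rw [Subsingleton.elim x w]
    rw [hball]
    refine le_of_eq ?_
    calc ENNReal.ofReal ‖f w‖ * volume (univ : Set (Fin 0 → ℂ))
        = ∫⁻ _x in (univ : Set (Fin 0 → ℂ)), ENNReal.ofReal ‖f w‖ := (setLIntegral_const _ _).symm
      _ = ∫⁻ x in (univ : Set (Fin 0 → ℂ)), ENNReal.ofReal ‖f x‖ :=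
          lintegral_congr fun x => by rw [hfx x]

  | succ n ih =>
    intro f s hs hf w r hr hsub
    set e := MeasurableEquiv.piFinSuccAbove (fun _ : Fin (n+1) => ℂ) 0 with he
    have hmp : MeasurePreserving e volume volume :=
      volume_preserving_piFinSuccAbove (fun _ : Fin (n+1) => ℂ) 0
    set w0 : ℂ := w 0 with hw0
    set tw : Fin n → ℂ := Fin.tail w with htw
    have hsymm_eq : ∀ (p : ℂ × (Fin n → ℂ)), e.symm p = Fin.cons p.1 p.2 := by
      intro p
      rw [he, MeasurableEquiv.piFinSuccAbove_symm_apply]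
      rw [show (Fin.insertNthEquiv (fun _ : Fin (n+1) => ℂ) 0) p = Fin.insertNth 0 p.1 p.2 from rfl]
      exact Fin.insertNth_zero' p.1 p.2
    have happly : ∀ x : Fin (n+1) → ℂ, e x = (x 0, Fin.tail x) := by
      intro x
      rw [he, MeasurableEquiv.piFinSuccAbove_apply]
      refine Prod.ext rfl ?_
      funext j
      simp [Fin.succAbove_zero, Fin.tail]
    set B : Set (ℂ × (Fin n → ℂ)) := Metric.ball w0 r ×ˢ Metric.ball tw r with hB
    -- set equality
    have hpre : Metric.ball w r = e ⁻¹' B := by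
      ext x
      simp only [hB, Set.mem_preimage, Set.mem_prod, Metric.mem_ball, happly x]
      rw [dist_pi_lt_iff hr, dist_pi_lt_iff hr]
      constructor
      · intro h
        exact ⟨h 0, fun j => h j.succ⟩
      · rintro ⟨h0, h1⟩ i
        refine Fin.cases h0 (fun j => ?_) i
        exact h1 j
    -- membership lemmas
    have hconsmem : ∀ (ζ : ℂ) (y : Fin n → ℂ), ζ ∈ Metric.closedBall w0 r →
        y ∈ Metric.closedBall tw r → Fin.cons ζ y ∈ Metric.closedBall w r := by
      intro ζ y hζ hy
      rw [Metric.mem_closedBall] at *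
      rw [dist_pi_le_iff hr.le]
      intro i
      refine Fin.cases ?_ (fun j => ?_) i
      · simpa using hζ
      · rw [Fin.cons_succ]
        exact le_trans (dist_le_pi_dist y tw j) hy
    -- differentiability of affine maps
    have hd2 : ∀ ζ : ℂ, Differentiable ℂ (fun y : Fin n → ℂ => (Fin.cons ζ y : Fin (n+1) → ℂ)) := by
      intro ζ
      refine differentiable_pi.mpr fun i => ?_
      refine Fin.cases ?_ (fun j => ?_) i
      · simpa using differentiable_const ζ
      · simp only [Fin.cons_succ]
        exact (ContinuousLinearMap.proj (R := ℂ) (φ := fun _ : Fin n => ℂ) j).differentiable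
    have hd1 : Differentiable ℂ (fun ζ : ℂ => (Fin.cons ζ tw : Fin (n+1) → ℂ)) := by
      refine differentiable_pi.mpr fun i => ?_
      refine Fin.cases ?_ (fun j => ?_) i
      · simpa using differentiable_id
      · simpa [Fin.cons_succ] using differentiable_const (tw j)
    -- volumes
    set V1 : ℝ≥0∞ := volume (Metric.ball w0 r) with hV1
    set V2 : ℝ≥0∞ := volume (Metric.ball tw r) with hV2
    have hvol : volume (Metric.ball w r) = V1 * V2 := by
      rw [hpre, hmp.measure_preimage
        ((measurableSet_ball.prod measurableSet_ball).nullMeasurableSet)]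
      show (volume : Measure (ℂ × (Fin n → ℂ))) (Metric.ball w0 r ×ˢ Metric.ball tw r) = V1 * V2
      rw [show (volume : Measure (ℂ × (Fin n → ℂ))) = (volume : Measure ℂ).prod volume from
        Measure.volume_eq_prod ℂ (Fin n → ℂ), Measure.prod_prod]
    -- continuity for AEMeasurable
    have hconscont : Continuous (fun p : ℂ × (Fin n → ℂ) => (Fin.cons p.1 p.2 : Fin (n+1) → ℂ)) := by
      refine continuous_pi fun i => ?_
      refine Fin.cases ?_ (fun j => ?_) i
      · simpa using continuous_fst
      · simp only [Fin.cons_succ]; fun_prop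
    have hmapsB : ∀ p : ℂ × (Fin n → ℂ), p ∈ B → (Fin.cons p.1 p.2 : Fin (n+1) → ℂ) ∈ s := by
      rintro ⟨ζ, y⟩ ⟨h1, h2⟩
      refine hsub (Metric.ball_subset_closedBall (Metric.mem_ball.mpr ?_))
      rw [dist_pi_lt_iff hr]
      intro i
      refine Fin.cases ?_ (fun j => ?_) i
      · simpa using Metric.mem_ball.mp h1
      · rw [Fin.cons_succ]
        exact lt_of_le_of_lt (dist_le_pi_dist y tw j) (Metric.mem_ball.mp h2)
    set F : ℂ × (Fin n → ℂ) → ℝ≥0∞ := fun p => ENNReal.ofReal ‖f (Fin.cons p.1 p.2)‖ with hF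
    have haemeasF : AEMeasurable F
        (((volume : Measure ℂ).restrict (Metric.ball w0 r)).prod
          ((volume : Measure (Fin n → ℂ)).restrict (Metric.ball tw r))) := by
      rw [Measure.prod_restrict]
      refine (ENNReal.continuous_ofReal.comp_continuousOn ?_).aemeasurable
        (measurableSet_ball.prod measurableSet_ball)
      exact (hf.continuousOn.comp hconscont.continuousOn hmapsB).norm
    -- main chain
    have hwcons : (Fin.cons w0 tw : Fin (n+1) → ℂ) = w := Fin.cons_self_tail w
    -- 1-d step
    have step1 : ENNReal.ofReal ‖f w‖ * V1
        ≤ ∫⁻ ζ in Metric.ball w0 r, ENNReal.ofReal ‖f (Fin.cons ζ tw)‖ := by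
      have hs1 : IsOpen ((fun ζ : ℂ => (Fin.cons ζ tw : Fin (n+1) → ℂ)) ⁻¹' s) :=
        hs.preimage hd1.continuous
      have hsub1 : Metric.closedBall w0 r ⊆ (fun ζ : ℂ => (Fin.cons ζ tw : Fin (n+1) → ℂ)) ⁻¹' s :=
        fun ζ hζ => hsub (hconsmem ζ tw hζ (Metric.mem_closedBall_self hr.le))
      have hg1 : DifferentiableOn ℂ (fun ζ : ℂ => f (Fin.cons ζ tw)) _ :=
        hf.comp hd1.differentiableOn (fun ζ hζ => hζ)
      have := disc_mvi_1d hs1 hg1 hr hsub1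
      rw [hwcons] at this
      exact this
    have step2 : ∀ ζ ∈ Metric.ball w0 r,
        ENNReal.ofReal ‖f (Fin.cons ζ tw)‖ * V2
          ≤ ∫⁻ y in Metric.ball tw r, ENNReal.ofReal ‖f (Fin.cons ζ y)‖ := by
      intro ζ hζ
      have hs2 : IsOpen ((fun y : Fin n → ℂ => (Fin.cons ζ y : Fin (n+1) → ℂ)) ⁻¹' s) :=
        hs.preimage (hd2 ζ).continuous
      have hsub2 : Metric.closedBall tw r
          ⊆ (fun y : Fin n → ℂ => (Fin.cons ζ y : Fin (n+1) → ℂ)) ⁻¹' s :=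
        fun y hy => hsub (hconsmem ζ y (Metric.ball_subset_closedBall hζ) hy)
      exact ih (fun y => f (Fin.cons ζ y)) _ hs2
        (hf.comp (hd2 ζ).differentiableOn (fun y hy => hy)) tw r hr hsub2
    have haemeas1 : AEMeasurable (fun ζ : ℂ => ENNReal.ofReal ‖f (Fin.cons ζ tw)‖)
        ((volume : Measure ℂ).restrict (Metric.ball w0 r)) := by
      refine (ENNReal.continuous_ofReal.comp_continuousOn ?_).aemeasurable measurableSet_ball
      refine ContinuousOn.norm ?_
      refine hf.continuousOn.comp (hd1.continuous.continuousOn) ?_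
      intro ζ hζ
      exact hsub (hconsmem ζ tw (Metric.ball_subset_closedBall hζ) (Metric.mem_closedBall_self hr.le))
    calc ENNReal.ofReal ‖f w‖ * volume (Metric.ball w r)
        = (ENNReal.ofReal ‖f w‖ * V1) * V2 := by rw [hvol, mul_assoc]
      _ ≤ (∫⁻ ζ in Metric.ball w0 r, ENNReal.ofReal ‖f (Fin.cons ζ tw)‖) * V2 :=
          mul_le_mul_left step1 V2
      _ = ∫⁻ ζ in Metric.ball w0 r, (ENNReal.ofReal ‖f (Fin.cons ζ tw)‖ * V2) :=
          (lintegral_mul_const'' V2 haemeas1).symm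
      _ ≤ ∫⁻ ζ in Metric.ball w0 r, ∫⁻ y in Metric.ball tw r,
            ENNReal.ofReal ‖f (Fin.cons ζ y)‖ :=
          setLIntegral_mono' measurableSet_ball step2
      _ = ∫⁻ p in B, F p := by
          rw [← lintegral_prod F haemeasF, Measure.prod_restrict,
            show ((volume : Measure ℂ).prod (volume : Measure (Fin n → ℂ)))
              = (volume : Measure (ℂ × (Fin n → ℂ))) from (Measure.volume_eq_prod ℂ (Fin n → ℂ)).symm]
      _ = ∫⁻ x in Metric.ball w r, ENNReal.ofReal ‖f x‖ := by
          rw [hpre, ← hmp.setLIntegral_comp_preimage_emb e.measurableEmbedding F B]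
          refine setLIntegral_congr_fun (e.measurableSet_preimage.mpr
            (measurableSet_ball.prod measurableSet_ball)) ?_
          refine fun x _ => ?_
          rw [hF]
          simp only [happly x]
          rw [Fin.cons_self_tail]


variable {n : ℕ}


lemma sq_mvi {f : (Fin n → ℂ) → ℂ} {s : Set (Fin n → ℂ)} (hs : IsOpen s)
    (hf : DifferentiableOn ℂ f s) {w : Fin n → ℂ} {r : ℝ} (hr : 0 < r)
    (hsub : Metric.closedBall w r ⊆ s) :
    ENNReal.ofReal (‖f w‖ ^ 2) * volume (Metric.ball w r)
      ≤ ∫⁻ x in Metric.ball w r, ENNReal.ofReal (‖f x‖ ^ 2) := by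
  have h := pi_mvi n (fun x => f x * f x) s hs (hf.mul hf) w r hr hsub
  have he : ∀ x, ‖f x * f x‖ = ‖f x‖ ^ 2 := fun x => by rw [norm_mul, sq]
  simp only [he] at h
  exact h

lemma weighted_lower (μ : Measure (Fin n → ℂ))
    {K A : Set (Fin n → ℂ)} (hAK : A ⊆ K) (hA : MeasurableSet A) {c : ℝ}
    (hc : ∀ᵐ z ∂volume, z ∈ K → ENNReal.ofReal c ≤ μ.rnDeriv volume z)
    {h : (Fin n → ℂ) → ℝ≥0∞} (hm : AEMeasurable h (volume.restrict A)) :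
    ENNReal.ofReal c * ∫⁻ z in A, h z ∂volume ≤ ∫⁻ z in A, h z ∂μ := by
  have hle : ((volume.withDensity (μ.rnDeriv volume)).restrict A) ≤ μ.restrict A :=
    Measure.restrict_mono (subset_refl A) (Measure.withDensity_rnDeriv_le μ volume)
  have h1 : ∫⁻ z in A, (μ.rnDeriv volume z) * h z ∂volume ≤ ∫⁻ z in A, h z ∂μ := by
    refine le_trans (le_of_eq ?_) (lintegral_mono' hle le_rfl)
    rw [restrict_withDensity hA, lintegral_withDensity_eq_lintegral_mul₀
      ((Measure.measurable_rnDeriv μ volume).aemeasurable) hm]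
    rfl
  refine le_trans ?_ h1
  rw [← lintegral_const_mul' _ _ ENNReal.ofReal_ne_top]
  refine lintegral_mono_ae ?_
  filter_upwards [ae_restrict_of_ae hc, ae_restrict_mem hA] with x hx hxA
  exact mul_le_mul_left (hx (hAK hxA)) _

lemma mu_ball_pos {Ω : Set (Fin n → ℂ)} (μ : Measure (Fin n → ℂ)) (hac : μ ≪ volume)
    (hlb : ∀ K : Set (Fin n → ℂ), K ⊆ Ω → IsCompact K →
      ∃ c : ℝ, 0 < c ∧ ∀ᵐ z ∂volume, z ∈ K → ENNReal.ofReal c ≤ μ.rnDeriv volume z)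
    {z : Fin n → ℂ} {ρ : ℝ} (hρ : 0 < ρ) (hsub : Metric.closedBall z ρ ⊆ Ω) :
    0 < μ (Metric.ball z ρ) := by
  obtain ⟨c, hc0, hc⟩ := hlb _ hsub (isCompact_closedBall z ρ)
  have h := weighted_lower μ Metric.ball_subset_closedBall measurableSet_ball hc
    (h := fun _ => 1) aemeasurable_const
  rw [setLIntegral_one, setLIntegral_one] at h
  refine lt_of_lt_of_le ?_ h
  exact ENNReal.mul_pos (ENNReal.ofReal_pos.mpr hc0).ne' (Metric.measure_ball_pos volume z hρ).ne'

lemma bergNormSq_mono {S T : Set (Fin n → ℂ)} (φ : (Fin n → ℂ) → ℝ)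
    (μ : Measure (Fin n → ℂ)) (f : (Fin n → ℂ) → ℂ) (hST : S ⊆ T) :
    bergNormSq S φ μ f ≤ bergNormSq T φ μ f :=
  lintegral_mono' (Measure.restrict_mono hST le_rfl) le_rfl

lemma berg_integrand_aemeas {W : Set (Fin n → ℂ)} (hW : MeasurableSet W)
    {f : (Fin n → ℂ) → ℂ} (hfc : ContinuousOn f W) {φ : (Fin n → ℂ) → ℝ}
    (hφm : Measurable φ) (μ : Measure (Fin n → ℂ)) :
    AEMeasurable (fun x => ENNReal.ofReal (‖f x‖ ^ 2 * Real.exp (-(φ x)))) (μ.restrict W) := by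
  refine ENNReal.measurable_ofReal.comp_aemeasurable ?_
  exact (((hfc.norm.pow 2).aemeasurable hW)).mul
    ((Real.measurable_exp.comp hφm.neg).aemeasurable)

lemma bergNormSq_smul (W : Set (Fin n → ℂ)) (φ : (Fin n → ℂ) → ℝ)
    (μ : Measure (Fin n → ℂ)) (f : (Fin n → ℂ) → ℂ) (a : ℂ) :
    bergNormSq W φ μ (a • f) = ENNReal.ofReal (‖a‖ ^ 2) * bergNormSq W φ μ f := by
  unfold bergNormSq
  rw [← lintegral_const_mul' _ _ ENNReal.ofReal_ne_top]
  refine lintegral_congr fun x => ?_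
  rw [← ENNReal.ofReal_mul (by positivity)]
  congr 1
  simp only [Pi.smul_apply, norm_smul, mul_pow]
  ring

lemma eval_zero_of_normSq_zero {Ω : Set (Fin n → ℂ)} (μ : Measure (Fin n → ℂ)) (hac : μ ≪ volume)
    (hlb : ∀ K : Set (Fin n → ℂ), K ⊆ Ω → IsCompact K →
      ∃ c : ℝ, 0 < c ∧ ∀ᵐ z ∂volume, z ∈ K → ENNReal.ofReal c ≤ μ.rnDeriv volume z)
    {φ : (Fin n → ℂ) → ℝ}
    (hφb : ∀ K : Set (Fin n → ℂ), K ⊆ Ω → IsCompact K → ∃ M : ℝ, ∀ z ∈ K, |φ z| ≤ M)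
    {W : Set (Fin n → ℂ)} (hWopen : IsOpen W) (hWΩ : W ⊆ Ω)
    {f : (Fin n → ℂ) → ℂ} (hfc : ContinuousOn f W) {z : Fin n → ℂ} (hz : z ∈ W)
    (h0 : bergNormSq W φ μ f = 0) : f z = 0 := by
  by_contra hne
  have hcont : ContinuousAt (fun x => ‖f x‖) z := ((hfc z hz).continuousAt (hWopen.mem_nhds hz)).norm
  have hhalf : ‖f z‖ / 2 < ‖f z‖ := half_lt_self (norm_pos_iff.mpr hne)
  have hev : {x | ‖f x‖ ∈ Ioi (‖f z‖ / 2)} ∈ nhds z := hcont (Ioi_mem_nhds hhalf)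
  obtain ⟨ρ, hρ0, hρsub⟩ := Metric.nhds_basis_closedBall.mem_iff.mp
    (Filter.inter_mem hev (hWopen.mem_nhds hz))
  obtain ⟨M, hM⟩ := hφb (Metric.closedBall z ρ) (fun x hx => hWΩ (hρsub hx).2)
    (isCompact_closedBall z ρ)
  set κ : ℝ := (‖f z‖ / 2) ^ 2 * Real.exp (-M) with hκ
  have hfz : 0 < ‖f z‖ := norm_pos_iff.mpr hne
  have hκ0 : 0 < κ := mul_pos (pow_pos (by linarith) 2) (Real.exp_pos _)
  have hlow : ∀ x ∈ Metric.ball z ρ,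
      ENNReal.ofReal κ ≤ ENNReal.ofReal (‖f x‖ ^ 2 * Real.exp (-(φ x))) := by
    intro x hx
    have hx' := hρsub (Metric.ball_subset_closedBall hx)
    refine ENNReal.ofReal_le_ofReal ?_
    have h1 : (‖f z‖ / 2) ^ 2 ≤ ‖f x‖ ^ 2 := by
      have hgt : ‖f z‖ / 2 < ‖f x‖ := hx'.1
      have h2 : (0:ℝ) ≤ ‖f z‖ / 2 := by positivity
      nlinarith [norm_nonneg (f x)]
    have h2 : Real.exp (-M) ≤ Real.exp (-(φ x)) := by
      refine Real.exp_le_exp.mpr (neg_le_neg ?_)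
      exact (abs_le.mp (hM x (Metric.ball_subset_closedBall hx))).2
    exact mul_le_mul h1 h2 (Real.exp_pos _).le (sq_nonneg _)
  have hge : ENNReal.ofReal κ * μ (Metric.ball z ρ) ≤ bergNormSq W φ μ f :=
    calc ENNReal.ofReal κ * μ (Metric.ball z ρ)
        = ∫⁻ _x in Metric.ball z ρ, ENNReal.ofReal κ ∂μ := (setLIntegral_const _ _).symm
      _ ≤ ∫⁻ x in Metric.ball z ρ, ENNReal.ofReal (‖f x‖ ^ 2 * Real.exp (-(φ x))) ∂μ :=
          setLIntegral_mono' measurableSet_ball hlow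
      _ ≤ bergNormSq W φ μ f :=
          bergNormSq_mono φ μ f (fun x hx => (hρsub (Metric.ball_subset_closedBall hx)).2)
  rw [h0] at hge
  have hpos : 0 < ENNReal.ofReal κ * μ (Metric.ball z ρ) :=
    ENNReal.mul_pos (ENNReal.ofReal_pos.mpr hκ0).ne'
      (mu_ball_pos μ hac hlb hρ0 (fun x hx => hWΩ (hρsub hx).2)).ne'
  exact hpos.ne' (le_antisymm hge zero_le)

lemma eval_le_const {Ω : Set (Fin n → ℂ)} (μ : Measure (Fin n → ℂ)) (hac : μ ≪ volume)
    (hlb : ∀ K : Set (Fin n → ℂ), K ⊆ Ω → IsCompact K →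
      ∃ c : ℝ, 0 < c ∧ ∀ᵐ z ∂volume, z ∈ K → ENNReal.ofReal c ≤ μ.rnDeriv volume z)
    {φ : (Fin n → ℂ) → ℝ} (hφm : Measurable φ)
    (hφb : ∀ K : Set (Fin n → ℂ), K ⊆ Ω → IsCompact K → ∃ M : ℝ, ∀ z ∈ K, |φ z| ≤ M)
    {T W' : Set (Fin n → ℂ)} (hT : IsCompact T) (hW' : IsOpen W') (hTW' : T ⊆ W')
    (hW'Ω : W' ⊆ Ω) :
    ∃ C : ℝ≥0∞, C ≠ ⊤ ∧ ∀ f : (Fin n → ℂ) → ℂ, DifferentiableOn ℂ f W' → ∀ w ∈ T,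
      ENNReal.ofReal (‖f w‖ ^ 2) ≤ C * bergNormSq W' φ μ f := by
  obtain ⟨δ, hδ0, hδ⟩ := hT.exists_thickening_subset_open hW' hTW'
  set ρ : ℝ := δ / 2 with hρ
  have hρ0 : 0 < ρ := by positivity
  set K' : Set (Fin n → ℂ) := Metric.cthickening ρ T with hK'
  have hK'c : IsCompact K' := hT.cthickening
  have hK'W' : K' ⊆ W' :=
    (Metric.cthickening_subset_thickening' hδ0 (by simp [hρ]; linarith) T).trans hδ
  obtain ⟨M, hM⟩ := hφb K' (hK'W'.trans hW'Ω) hK'c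
  obtain ⟨c, hc0, hc⟩ := hlb K' (hK'W'.trans hW'Ω) hK'c
  set V : ℝ≥0∞ := volume (Metric.ball (0 : Fin n → ℂ) ρ) with hV
  have hV0 : V ≠ 0 := (Metric.measure_ball_pos volume 0 hρ0).ne'
  have hVt : V ≠ ⊤ := measure_ball_lt_top.ne
  have hcne : ENNReal.ofReal c ≠ 0 := (ENNReal.ofReal_pos.mpr hc0).ne'
  refine ⟨ENNReal.ofReal (Real.exp M) * (ENNReal.ofReal c)⁻¹ * V⁻¹, ?_, ?_⟩
  · exact ENNReal.mul_ne_top (ENNReal.mul_ne_top ENNReal.ofReal_ne_top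
      (ENNReal.inv_ne_top.mpr hcne)) (ENNReal.inv_ne_top.mpr hV0)
  intro f hf w hw
  have hballK' : Metric.closedBall w ρ ⊆ K' := Metric.closedBall_subset_cthickening hw ρ
  have hballW' : Metric.closedBall w ρ ⊆ W' := hballK'.trans hK'W'
  have h1 : ENNReal.ofReal (‖f w‖ ^ 2) * V
      ≤ ∫⁻ x in Metric.ball w ρ, ENNReal.ofReal (‖f x‖ ^ 2) := by
    have := sq_mvi hW' hf hρ0 hballW'
    rwa [Measure.addHaar_ball_center volume w ρ] at this
  have h2 : (∫⁻ x in Metric.ball w ρ, ENNReal.ofReal (‖f x‖ ^ 2) ∂volume)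
      ≤ ENNReal.ofReal (Real.exp M)
        * ∫⁻ x in Metric.ball w ρ, ENNReal.ofReal (‖f x‖ ^ 2 * Real.exp (-(φ x))) ∂volume := by
    rw [← lintegral_const_mul' _ _ ENNReal.ofReal_ne_top]
    refine setLIntegral_mono' measurableSet_ball fun x hx => ?_
    rw [← ENNReal.ofReal_mul (Real.exp_pos M).le]
    refine ENNReal.ofReal_le_ofReal ?_
    have hφx : φ x ≤ M := (abs_le.mp (hM x (hballK' (Metric.ball_subset_closedBall hx)))).2
    have hexp : Real.exp (-M) ≤ Real.exp (-(φ x)) := Real.exp_le_exp.mpr (neg_le_neg hφx)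
    calc ‖f x‖ ^ 2 = Real.exp M * (‖f x‖ ^ 2 * Real.exp (-M)) := by
          rw [mul_comm (‖f x‖ ^ 2), ← mul_assoc, ← Real.exp_add]
          simp
      _ ≤ Real.exp M * (‖f x‖ ^ 2 * Real.exp (-(φ x))) := by
          have : ‖f x‖ ^ 2 * Real.exp (-M) ≤ ‖f x‖ ^ 2 * Real.exp (-(φ x)) :=
            mul_le_mul_of_nonneg_left hexp (sq_nonneg _)
          exact mul_le_mul_of_nonneg_left this (Real.exp_pos M).le
  have hmeas : AEMeasurable (fun x => ENNReal.ofReal (‖f x‖ ^ 2 * Real.exp (-(φ x))))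
      (volume.restrict (Metric.ball w ρ)) := by
    refine AEMeasurable.mono_measure ?_ (Measure.restrict_mono
      (Metric.ball_subset_closedBall.trans hballW') le_rfl)
    exact berg_integrand_aemeas hW'.measurableSet (hf.continuousOn) hφm volume
  have h3 : (∫⁻ x in Metric.ball w ρ, ENNReal.ofReal (‖f x‖ ^ 2 * Real.exp (-(φ x))) ∂volume)
      ≤ (ENNReal.ofReal c)⁻¹
        * ∫⁻ x in Metric.ball w ρ, ENNReal.ofReal (‖f x‖ ^ 2 * Real.exp (-(φ x))) ∂μ := by
    have hw := weighted_lower μ (Metric.ball_subset_closedBall.trans hballK')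
      measurableSet_ball hc hmeas
    calc (∫⁻ x in Metric.ball w ρ, ENNReal.ofReal (‖f x‖ ^ 2 * Real.exp (-(φ x))) ∂volume)
        = (ENNReal.ofReal c)⁻¹ * (ENNReal.ofReal c
            * ∫⁻ x in Metric.ball w ρ, ENNReal.ofReal (‖f x‖ ^ 2 * Real.exp (-(φ x))) ∂volume) := by
          rw [← mul_assoc, ENNReal.inv_mul_cancel hcne ENNReal.ofReal_ne_top, one_mul]
      _ ≤ _ := mul_le_mul_right hw _
  have h4 : (∫⁻ x in Metric.ball w ρ, ENNReal.ofReal (‖f x‖ ^ 2 * Real.exp (-(φ x))) ∂μ)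
      ≤ bergNormSq W' φ μ f :=
    bergNormSq_mono φ μ f (Metric.ball_subset_closedBall.trans hballW')
  have hfinal : ENNReal.ofReal (‖f w‖ ^ 2) * V
      ≤ ENNReal.ofReal (Real.exp M) * ((ENNReal.ofReal c)⁻¹ * bergNormSq W' φ μ f) := by
    refine h1.trans (h2.trans ?_)
    exact mul_le_mul_right (h3.trans (mul_le_mul_right h4 _)) _
  calc ENNReal.ofReal (‖f w‖ ^ 2)
      ≤ (ENNReal.ofReal (Real.exp M) * ((ENNReal.ofReal c)⁻¹ * bergNormSq W' φ μ f)) / V :=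
        (ENNReal.le_div_iff_mul_le (Or.inl hV0) (Or.inl hVt)).mpr hfinal
    _ = ENNReal.ofReal (Real.exp M) * (ENNReal.ofReal c)⁻¹ * V⁻¹ * bergNormSq W' φ μ f := by
        rw [div_eq_mul_inv]; ring



lemma bergNormSq_neg (W : Set (Fin n → ℂ)) (φ : (Fin n → ℂ) → ℝ)
    (μ : Measure (Fin n → ℂ)) (f : (Fin n → ℂ) → ℂ) :
    bergNormSq W φ μ (-f) = bergNormSq W φ μ f := by
  unfold bergNormSq
  exact lintegral_congr fun x => by rw [Pi.neg_apply, norm_neg]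

lemma div_le_kernel {W : Set (Fin n → ℂ)} {φ : (Fin n → ℂ) → ℝ} {μ : Measure (Fin n → ℂ)}
    {z : Fin n → ℂ} {f : (Fin n → ℂ) → ℂ} (hf : DifferentiableOn ℂ f W)
    (h0 : bergNormSq W φ μ f ≠ 0) (ht : bergNormSq W φ μ f ≠ ⊤) :
    ENNReal.ofReal (‖f z‖ ^ 2) / bergNormSq W φ μ f ≤ bergKernel W φ μ z :=
  le_iSup_of_le f (le_iSup_of_le hf (le_iSup_of_le h0 (le_iSup_of_le ht le_rfl)))

lemma bergKernel_le {W : Set (Fin n → ℂ)} {φ : (Fin n → ℂ) → ℝ} {μ : Measure (Fin n → ℂ)}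
    {z : Fin n → ℂ} {C : ℝ≥0∞}
    (h : ∀ f : (Fin n → ℂ) → ℂ, DifferentiableOn ℂ f W → bergNormSq W φ μ f ≠ 0 →
      bergNormSq W φ μ f ≠ ⊤ → ENNReal.ofReal (‖f z‖ ^ 2) / bergNormSq W φ μ f ≤ C) :
    bergKernel W φ μ z ≤ C :=
  iSup_le fun f => iSup_le fun hf => iSup_le fun h0 => iSup_le fun ht => h f hf h0 ht

lemma lt_bergKernel_iff {W : Set (Fin n → ℂ)} {φ : (Fin n → ℂ) → ℝ} {μ : Measure (Fin n → ℂ)}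
    {z : Fin n → ℂ} {x : ℝ≥0∞} :
    x < bergKernel W φ μ z ↔ ∃ f, DifferentiableOn ℂ f W ∧ bergNormSq W φ μ f ≠ 0 ∧
      bergNormSq W φ μ f ≠ ⊤ ∧ x < ENNReal.ofReal (‖f z‖ ^ 2) / bergNormSq W φ μ f := by
  rw [bergKernel]
  simp only [lt_iSup_iff]
  constructor
  · rintro ⟨f, h1, h2, h3, h4⟩; exact ⟨f, h1, h2, h3, h4⟩
  · rintro ⟨f, h1, h2, h3, h4⟩; exact ⟨f, h1, h2, h3, h4⟩

lemma bergKernel_antitone {Ω : Set (Fin n → ℂ)} (μ : Measure (Fin n → ℂ)) (hac : μ ≪ volume)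
    (hlb : ∀ K : Set (Fin n → ℂ), K ⊆ Ω → IsCompact K →
      ∃ c : ℝ, 0 < c ∧ ∀ᵐ z ∂volume, z ∈ K → ENNReal.ofReal c ≤ μ.rnDeriv volume z)
    {φ : (Fin n → ℂ) → ℝ}
    (hφb : ∀ K : Set (Fin n → ℂ), K ⊆ Ω → IsCompact K → ∃ M : ℝ, ∀ z ∈ K, |φ z| ≤ M)
    {W₁ W₂ : Set (Fin n → ℂ)} (h1open : IsOpen W₁) (h12 : W₁ ⊆ W₂) (h2Ω : W₂ ⊆ Ω)
    {z : Fin n → ℂ} (hz : z ∈ W₁) :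
    bergKernel W₂ φ μ z ≤ bergKernel W₁ φ μ z := by
  refine bergKernel_le fun f hf h0 ht => ?_
  by_cases h1 : bergNormSq W₁ φ μ f = 0
  · have hz0 : f z = 0 := eval_zero_of_normSq_zero μ hac hlb hφb h1open (h12.trans h2Ω)
      (hf.continuousOn.mono h12) hz h1
    rw [hz0]
    simp
  · refine le_trans ?_ (div_le_kernel (hf.mono h12) h1
      (fun htop => ht (top_le_iff.mp (htop ▸ bergNormSq_mono φ μ f h12))))
    exact ENNReal.div_le_div le_rfl (bergNormSq_mono φ μ f h12)

/-- Cauchy-type estimate: sup bound on a `2ρ`-ball controls `fderiv` on the `ρ`-ball. -/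
lemma fderiv_diff_bound {d : (Fin n → ℂ) → ℂ} {U : Set (Fin n → ℂ)} (hU : IsOpen U)
    (hd : DifferentiableOn ℂ d U) {x₀ : Fin n → ℂ} {ρ ε : ℝ} (hρ : 0 < ρ)
    (hsub : Metric.closedBall x₀ (2*ρ) ⊆ U) (hε : 0 ≤ ε)
    (hbound : ∀ x ∈ Metric.closedBall x₀ (2*ρ), ‖d x‖ ≤ ε) :
    ∀ y ∈ Metric.ball x₀ ρ, ‖fderiv ℂ d y‖ ≤ n * (ε / ρ) := by
  intro y hy
  have hyd : dist y x₀ ≤ ρ := (Metric.mem_ball.mp hy).le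
  have hyU : y ∈ U := hsub (Metric.mem_closedBall.mpr (by linarith))
  have hdy : DifferentiableAt ℂ d y := (hd y hyU).differentiableAt (hU.mem_nhds hyU)
  set L := fderiv ℂ d y with hL
  refine ContinuousLinearMap.opNorm_le_bound L
    (mul_nonneg (Nat.cast_nonneg n) (div_nonneg hε hρ.le)) ?_
  intro v
  have hv : v = ∑ i, v i • ((Pi.single i 1 : Fin n → ℂ)) := by
    funext t
    rw [Finset.sum_apply]
    simp [Pi.single_apply]
  have hdecomp : L v = ∑ i, v i • L ((Pi.single i 1 : Fin n → ℂ)) := by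
    conv_lhs => rw [hv]
    rw [map_sum]
    exact Finset.sum_congr rfl fun i _ => by rw [L.map_smul]
  have hslice_mem : ∀ i : Fin n, ∀ ζ : ℂ, dist ζ (y i) ≤ ρ →
      (y + (ζ - y i) • (Pi.single i 1 : Fin n → ℂ)) ∈ Metric.closedBall x₀ (2*ρ) := by
    intro i ζ hζ
    rw [Metric.mem_closedBall, dist_pi_le_iff (by linarith)]
    intro t
    rcases eq_or_ne t i with rfl | hne
    · have h1 : (y + (ζ - y t) • (Pi.single t 1 : Fin n → ℂ)) t = ζ := by
        simp [Pi.single_apply]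
      rw [h1]
      calc dist ζ (x₀ t) ≤ dist ζ (y t) + dist (y t) (x₀ t) := dist_triangle _ _ _
        _ ≤ ρ + ρ := add_le_add hζ (le_trans (dist_le_pi_dist y x₀ t) hyd)
        _ = 2*ρ := by ring
    · have h1 : (y + (ζ - y i) • (Pi.single i 1 : Fin n → ℂ)) t = y t := by
        simp [Pi.single_apply, hne]
      rw [h1]
      calc dist (y t) (x₀ t) ≤ dist y x₀ := dist_le_pi_dist y x₀ t
        _ ≤ 2*ρ := by linarith
  have hpart : ∀ i : Fin n, ‖L ((Pi.single i 1 : Fin n → ℂ))‖ ≤ ε / ρ := by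
    intro i
    set aff : ℂ → (Fin n → ℂ) := fun ζ => y + (ζ - y i) • (Pi.single i 1 : Fin n → ℂ) with haffdef
    have haff : Differentiable ℂ aff :=
      differentiable_const _ |>.add ((differentiable_id.sub_const _).smul_const _)
    set sl : ℂ → ℂ := fun ζ => d (aff ζ) with hsl
    set V : Set ℂ := aff ⁻¹' U with hV
    have hVopen : IsOpen V := hU.preimage haff.continuous
    have hslDiff : DifferentiableOn ℂ sl V := hd.comp haff.differentiableOn (fun ζ hζ => hζ)
    have hclosed : Metric.closedBall (y i) ρ ⊆ V :=
      fun ζ hζ => hsub (hslice_mem i ζ (Metric.mem_closedBall.mp hζ))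
    have haffy : aff (y i) = y := by simp [haffdef]
    have hhd : HasDerivAt sl (L ((Pi.single i 1 : Fin n → ℂ))) (y i) := by
      have h1 : HasDerivAt (fun ζ : ℂ => ζ - y i) 1 (y i) := (hasDerivAt_id _).sub_const _
      have h2 : HasDerivAt (fun ζ : ℂ => (ζ - y i) • (Pi.single i 1 : Fin n → ℂ))
          ((1:ℂ) • (Pi.single i 1 : Fin n → ℂ)) (y i) := h1.smul_const _
      have h3 : HasDerivAt aff ((Pi.single i 1 : Fin n → ℂ)) (y i) := by
        have := h2.const_add y
        rw [one_smul] at this; exact this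
      have h4 : HasFDerivAt d L (aff (y i)) := by rw [haffy]; exact hdy.hasFDerivAt
      exact h4.comp_hasDerivAt (y i) h3
    have hcder : Complex.cderiv ρ sl (y i) = deriv sl (y i) := Complex.cderiv_eq_deriv hVopen hslDiff hρ hclosed
    have hbnd : ‖Complex.cderiv ρ sl (y i)‖ ≤ ε / ρ := by
      refine Complex.norm_cderiv_le hρ fun w hw => ?_
      exact hbound _ (hslice_mem i w (le_of_eq (Metric.mem_sphere.mp hw)))
    rw [hcder, hhd.deriv] at hbnd
    exact hbnd
  calc ‖L v‖ = ‖∑ i, v i • L ((Pi.single i 1 : Fin n → ℂ))‖ := by rw [hdecomp]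
    _ ≤ ∑ i, ‖v i • L ((Pi.single i 1 : Fin n → ℂ))‖ := norm_sum_le _ _
    _ ≤ ∑ _i : Fin n, ‖v‖ * (ε/ρ) := by
        refine Finset.sum_le_sum fun i _ => ?_
        rw [norm_smul]
        exact mul_le_mul (norm_le_pi_norm v i) (hpart i) (norm_nonneg _) (norm_nonneg v)
    _ = n * (ε/ρ) * ‖v‖ := by
        rw [Finset.sum_const, Finset.card_univ, Fintype.card_fin, nsmul_eq_mul]
        ring

end RamadanovAux


/-- **Ramadanov-type theorem for an increasing union of domains**: the Bergman kernels
of an increasing exhaustion decrease to the Bergman kernel of the union. -/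
theorem bergKernel_increasing_union {n : ℕ}
    (Ω : Set (Fin n → ℂ)) (hΩ : IsOpen Ω) (hb : Bornology.IsBounded Ω)
    (μ : Measure (Fin n → ℂ)) (hac : μ ≪ volume)
    (hlb : ∀ K : Set (Fin n → ℂ), K ⊆ Ω → IsCompact K →
      ∃ c : ℝ, 0 < c ∧ ∀ᵐ z ∂volume, z ∈ K → ENNReal.ofReal c ≤ μ.rnDeriv volume z)
    (φ : (Fin n → ℂ) → ℝ) (hφm : Measurable φ)
    (hφb : ∀ K : Set (Fin n → ℂ), K ⊆ Ω → IsCompact K → ∃ M : ℝ, ∀ z ∈ K, |φ z| ≤ M)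
    (Ωj : ℕ → Set (Fin n → ℂ)) (hopen : ∀ j, IsOpen (Ωj j)) (hsub : ∀ j, Ωj j ⊆ Ω)
    (hmono : Monotone Ωj) (hunion : (⋃ j, Ωj j) = Ω)
    (z : Fin n → ℂ) (hz : z ∈ Ωj 0) :
    Antitone (fun j => bergKernel (Ωj j) φ μ z) ∧
    Filter.Tendsto (fun j => bergKernel (Ωj j) φ μ z) Filter.atTop
      (nhds (bergKernel Ω φ μ z)) := by
  classical
  have hanti : Antitone (fun j => bergKernel (Ωj j) φ μ z) := by
    intro j k hjk
    exact bergKernel_antitone μ hac hlb hφb (hopen j) (hmono hjk) (hsub k)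
      (hmono (Nat.zero_le j) hz)
  have htend : Filter.Tendsto (fun j => bergKernel (Ωj j) φ μ z) Filter.atTop
      (nhds (⨅ j, bergKernel (Ωj j) φ μ z)) := tendsto_atTop_iInf hanti
  set L : ℝ≥0∞ := ⨅ j, bergKernel (Ωj j) φ μ z with hLdef
  suffices hKL : bergKernel Ω φ μ z = L by
    rw [hKL]
    exact ⟨hanti, htend⟩
  have hKle : bergKernel Ω φ μ z ≤ L := by
    refine le_iInf fun j => ?_
    exact bergKernel_antitone μ hac hlb hφb (hopen j) (hsub j) (subset_refl Ω)
      (hmono (Nat.zero_le j) hz)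
  refine le_antisymm hKle ?_
  by_cases hL0 : L = 0
  · rw [hL0]; exact zero_le
  -- uniform upper bound for the kernels
  obtain ⟨C₀, hC₀t, hC₀⟩ := eval_le_const μ hac hlb hφm hφb
    (isCompact_singleton : IsCompact {z}) (hopen 0) (singleton_subset_iff.mpr hz) (hsub 0)
  have hKjle : ∀ j, bergKernel (Ωj j) φ μ z ≤ C₀ := by
    intro j
    refine bergKernel_le fun f hf h0 ht => ?_
    have h := hC₀ f (hf.mono (hmono (Nat.zero_le j))) z rfl
    refine ENNReal.div_le_of_le_mul ?_
    exact h.trans (mul_le_mul_right (bergNormSq_mono φ μ f (hmono (Nat.zero_le j))) C₀)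
  have hLle : ∀ j, L ≤ bergKernel (Ωj j) φ μ z := fun j => iInf_le _ j
  have hLt : L ≠ ⊤ := ne_top_of_le_ne_top hC₀t ((hLle 0).trans (hKjle 0))
  have hKj0 : ∀ j, bergKernel (Ωj j) φ μ z ≠ 0 :=
    fun j h => hL0 (le_antisymm ((hLle j).trans_eq h) zero_le)
  have hKjt : ∀ j, bergKernel (Ωj j) φ μ z ≠ ⊤ := fun j => ne_top_of_le_ne_top hC₀t (hKjle j)
  have hLreal : 0 < L.toReal := ENNReal.toReal_pos hL0 hLt
  -- the defect sequence δ
  set δ : ℕ → ℝ≥0∞ := fun j => ENNReal.ofReal (L.toReal / (j + 2)) with hδdef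
  have hδpos : ∀ j, δ j ≠ 0 := by
    intro j
    refine (ENNReal.ofReal_pos.mpr ?_).ne'
    positivity
  have hδltL : ∀ j, δ j < L := by
    intro j
    have h1 : L.toReal / (j + 2) < L.toReal := by
      refine div_lt_self hLreal ?_
      have := Nat.cast_nonneg (α := ℝ) j
      linarith
    calc δ j < ENNReal.ofReal L.toReal := (ENNReal.ofReal_lt_ofReal_iff hLreal).mpr h1
      _ = L := ENNReal.ofReal_toReal hLt
  have hδanti : Antitone δ := by
    intro j k hjk
    refine ENNReal.ofReal_le_ofReal ?_
    have hj2 : (0:ℝ) < (j:ℝ) + 2 := by positivity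
    have hjk2 : ((j:ℝ) + 2) ≤ (k:ℝ) + 2 := by
      have : (j:ℝ) ≤ k := Nat.cast_le.mpr hjk
      linarith
    gcongr
  have hseq : Filter.Tendsto (fun j : ℕ => L.toReal / ((j:ℝ) + 2)) Filter.atTop (nhds 0) := by
    refine Filter.Tendsto.div_atTop tendsto_const_nhds ?_
    exact Filter.tendsto_atTop_add_const_right _ 2 tendsto_natCast_atTop_atTop
  have hδto : Filter.Tendsto δ Filter.atTop (nhds 0) := by
    have h := (ENNReal.continuous_ofReal.tendsto 0).comp hseq
    simpa [hδdef, Function.comp_def] using h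
  -- select near-optimal competitors
  have hsel : ∀ j, ∃ f, DifferentiableOn ℂ f (Ωj j) ∧ bergNormSq (Ωj j) φ μ f ≠ 0 ∧
      bergNormSq (Ωj j) φ μ f ≠ ⊤ ∧ bergKernel (Ωj j) φ μ z - δ j
        < ENNReal.ofReal (‖f z‖ ^ 2) / bergNormSq (Ωj j) φ μ f := by
    intro j
    refine lt_bergKernel_iff.mp ?_
    exact ENNReal.sub_lt_self (hKjt j) (hKj0 j) (hδpos j)
  choose F hFdiff hF0 hFt hFgt using hsel
  have hKδ0 : ∀ j, bergKernel (Ωj j) φ μ z - δ j ≠ 0 := by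
    intro j
    have : δ j < bergKernel (Ωj j) φ μ z := lt_of_lt_of_le (hδltL j) (hLle j)
    exact (tsub_pos_of_lt this).ne'
  have hFz : ∀ j, F j z ≠ 0 := by
    intro j hzero
    have h := hFgt j
    rw [hzero] at h
    simp only [norm_zero, zero_pow, ENNReal.ofReal_zero, ENNReal.zero_div] at h
    exact hKδ0 j (le_antisymm (le_of_lt (by simpa using h)) zero_le)
  set m : ℕ → (Fin n → ℂ) → ℂ := fun j => (F j z)⁻¹ • F j with hmdef
  have hmdiff : ∀ j, DifferentiableOn ℂ (m j) (Ωj j) := fun j => (hFdiff j).const_smul ((F j z)⁻¹)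
  have hmz : ∀ j, m j z = 1 := by
    intro j
    simp only [hmdef, Pi.smul_apply, smul_eq_mul]
    exact inv_mul_cancel₀ (hFz j)
  -- bound the norms of the normalized competitors
  have hAval : ∀ j, bergNormSq (Ωj j) φ μ (m j)
      = (ENNReal.ofReal (‖F j z‖ ^ 2) / bergNormSq (Ωj j) φ μ (F j))⁻¹ := by
    intro j
    have h1 : bergNormSq (Ωj j) φ μ (m j)
        = ENNReal.ofReal (‖(F j z)⁻¹‖ ^ 2) * bergNormSq (Ωj j) φ μ (F j) := by
      rw [hmdef]
      exact bergNormSq_smul _ _ _ _ _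
    have hFzpos : 0 < ‖F j z‖ ^ 2 := pow_pos (norm_pos_iff.mpr (hFz j)) 2
    have h2 : ENNReal.ofReal (‖(F j z)⁻¹‖ ^ 2) = (ENNReal.ofReal (‖F j z‖ ^ 2))⁻¹ := by
      rw [norm_inv, inv_pow, ENNReal.ofReal_inv_of_pos hFzpos]
    rw [h1, h2, ENNReal.inv_div (Or.inr ENNReal.ofReal_ne_top)
      (Or.inr (ENNReal.ofReal_pos.mpr hFzpos).ne'), ENNReal.div_eq_inv_mul]
  have hAub : ∀ j, bergNormSq (Ωj j) φ μ (m j) ≤ (bergKernel (Ωj j) φ μ z - δ j)⁻¹ := by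
    intro j
    rw [hAval j]
    exact ENNReal.inv_le_inv.mpr (hFgt j).le
  have hAub2 : ∀ j, bergNormSq (Ωj j) φ μ (m j) ≤ (L - δ j)⁻¹ := by
    intro j
    refine (hAub j).trans (ENNReal.inv_le_inv.mpr (tsub_le_tsub_right (hLle j) _))
  -- lower bound for normalized functions
  have hnorm_lb : ∀ (j : ℕ) (g : (Fin n → ℂ) → ℂ), DifferentiableOn ℂ g (Ωj j) → g z = 1 →
      (bergKernel (Ωj j) φ μ z)⁻¹ ≤ bergNormSq (Ωj j) φ μ g := by
    intro j g hg hgz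
    by_cases h0 : bergNormSq (Ωj j) φ μ g = 0
    · exfalso
      have h := eval_zero_of_normSq_zero μ hac hlb hφb (hopen j) (hsub j)
        hg.continuousOn (hmono (Nat.zero_le j) hz) h0
      rw [hgz] at h
      exact one_ne_zero h
    by_cases ht : bergNormSq (Ωj j) φ μ g = ⊤
    · rw [ht]; exact le_top
    have hdiv := div_le_kernel (z := z) hg h0 ht
    rw [hgz] at hdiv
    simp only [norm_one, one_pow, ENNReal.ofReal_one] at hdiv
    have h2 := ENNReal.inv_le_inv.mpr hdiv
    rwa [one_div, inv_inv] at h2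
  -- parallelogram estimate
  have h2invt : ((2:ℝ≥0∞)⁻¹ : ℝ≥0∞) ≠ ⊤ := ENNReal.inv_ne_top.mpr two_ne_zero
  have hpar : ∀ (j k : ℕ), j ≤ k →
      bergNormSq (Ωj j) φ μ ((2:ℂ)⁻¹ • (m j - m k))
        ≤ 2⁻¹ * bergNormSq (Ωj j) φ μ (m j) + 2⁻¹ * bergNormSq (Ωj j) φ μ (m k)
          - (bergKernel (Ωj j) φ μ z)⁻¹ := by
    intro j k hjk
    have hacont : ContinuousOn (m j) (Ωj j) := (hmdiff j).continuousOn
    have hbcont : ContinuousOn (m k) (Ωj j) := ((hmdiff k).mono (hmono hjk)).continuousOn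
    have key : ∀ u v : ℂ, ‖(2:ℂ)⁻¹ • (u - v)‖^2 + ‖(2:ℂ)⁻¹ • (u + v)‖^2
        = 2⁻¹ * ‖u‖^2 + 2⁻¹ * ‖v‖^2 := by
      intro u v
      rw [norm_smul, norm_smul, mul_pow, mul_pow]
      have h2 : ‖(2:ℂ)⁻¹‖ = 2⁻¹ := by
        rw [norm_inv]
        norm_num
      rw [h2]
      rw [Complex.sq_norm, Complex.sq_norm, Complex.sq_norm, Complex.sq_norm,
        Complex.normSq_sub, Complex.normSq_add]
      ring
    have h2inv : (2:ℝ≥0∞)⁻¹ = ENNReal.ofReal (2⁻¹) := by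
      rw [ENNReal.ofReal_inv_of_pos two_pos, ENNReal.ofReal_ofNat]
    have hiden : bergNormSq (Ωj j) φ μ ((2:ℂ)⁻¹ • (m j - m k))
        + bergNormSq (Ωj j) φ μ ((2:ℂ)⁻¹ • (m j + m k))
        = 2⁻¹ * bergNormSq (Ωj j) φ μ (m j) + 2⁻¹ * bergNormSq (Ωj j) φ μ (m k) := by
      have hA := berg_integrand_aemeas (hopen j).measurableSet
        ((hacont.sub hbcont).const_smul ((2:ℂ)⁻¹)) hφm μ
      have hC := berg_integrand_aemeas (hopen j).measurableSet hacont hφm μ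
      have e1 : ∀ x : Fin n → ℂ,
          ENNReal.ofReal (‖((2:ℂ)⁻¹ • (m j - m k)) x‖^2 * Real.exp (-(φ x)))
            + ENNReal.ofReal (‖((2:ℂ)⁻¹ • (m j + m k)) x‖^2 * Real.exp (-(φ x)))
          = 2⁻¹ * ENNReal.ofReal (‖m j x‖^2 * Real.exp (-(φ x)))
            + 2⁻¹ * ENNReal.ofReal (‖m k x‖^2 * Real.exp (-(φ x))) := by
        intro x
        have hE : 0 < Real.exp (-(φ x)) := Real.exp_pos _
        simp only [Pi.smul_apply, Pi.sub_apply, Pi.add_apply]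
        rw [h2inv, ← ENNReal.ofReal_mul (by positivity), ← ENNReal.ofReal_mul (by positivity),
          ← ENNReal.ofReal_add (by positivity) (by positivity),
          ← ENNReal.ofReal_add (by positivity) (by positivity)]
        congr 1
        have hk := key (m j x) (m k x)
        nlinarith [hk, hE.le]
      calc bergNormSq (Ωj j) φ μ ((2:ℂ)⁻¹ • (m j - m k))
            + bergNormSq (Ωj j) φ μ ((2:ℂ)⁻¹ • (m j + m k))
          = ∫⁻ x in Ωj j, (ENNReal.ofReal (‖((2:ℂ)⁻¹ • (m j - m k)) x‖^2 * Real.exp (-(φ x)))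
              + ENNReal.ofReal (‖((2:ℂ)⁻¹ • (m j + m k)) x‖^2 * Real.exp (-(φ x)))) ∂μ :=
            (lintegral_add_left' hA _).symm
        _ = ∫⁻ x in Ωj j, (2⁻¹ * ENNReal.ofReal (‖m j x‖^2 * Real.exp (-(φ x)))
              + 2⁻¹ * ENNReal.ofReal (‖m k x‖^2 * Real.exp (-(φ x)))) ∂μ :=
            lintegral_congr e1
        _ = (∫⁻ x in Ωj j, 2⁻¹ * ENNReal.ofReal (‖m j x‖^2 * Real.exp (-(φ x))) ∂μ)
              + ∫⁻ x in Ωj j, 2⁻¹ * ENNReal.ofReal (‖m k x‖^2 * Real.exp (-(φ x))) ∂μ :=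
            lintegral_add_left' (hC.const_mul _) _
        _ = 2⁻¹ * bergNormSq (Ωj j) φ μ (m j) + 2⁻¹ * bergNormSq (Ωj j) φ μ (m k) := by
            rw [lintegral_const_mul' _ _ h2invt, lintegral_const_mul' _ _ h2invt]
            rfl
    have hsum_lb : (bergKernel (Ωj j) φ μ z)⁻¹
        ≤ bergNormSq (Ωj j) φ μ ((2:ℂ)⁻¹ • (m j + m k)) := by
      refine hnorm_lb j _ (((hmdiff j).add ((hmdiff k).mono (hmono hjk))).const_smul
        ((2:ℂ)⁻¹)) ?_
      simp only [Pi.smul_apply, Pi.add_apply, hmz j, hmz k, smul_eq_mul]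
      norm_num
    have hle : bergNormSq (Ωj j) φ μ ((2:ℂ)⁻¹ • (m j - m k)) + (bergKernel (Ωj j) φ μ z)⁻¹
        ≤ 2⁻¹ * bergNormSq (Ωj j) φ μ (m j) + 2⁻¹ * bergNormSq (Ωj j) φ μ (m k) := by
      calc bergNormSq (Ωj j) φ μ ((2:ℂ)⁻¹ • (m j - m k)) + (bergKernel (Ωj j) φ μ z)⁻¹
          ≤ bergNormSq (Ωj j) φ μ ((2:ℂ)⁻¹ • (m j - m k))
            + bergNormSq (Ωj j) φ μ ((2:ℂ)⁻¹ • (m j + m k)) := add_le_add le_rfl hsum_lb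
        _ = _ := hiden
    refine ENNReal.le_sub_of_add_le_left (ENNReal.inv_ne_top.mpr (hKj0 j)) ?_
    rwa [add_comm]
  -- the error sequence
  set eps : ℕ → ℝ≥0∞ := fun j => 2⁻¹ * (bergKernel (Ωj j) φ μ z - δ j)⁻¹
    + 2⁻¹ * (L - δ j)⁻¹ - (bergKernel (Ωj j) φ μ z)⁻¹ with hepsdef
  have hpar2 : ∀ j k, j ≤ k →
      bergNormSq (Ωj j) φ μ ((2:ℂ)⁻¹ • (m j - m k)) ≤ eps j := by
    intro j k hjk
    refine (hpar j k hjk).trans ?_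
    refine tsub_le_tsub_right (add_le_add (mul_le_mul_right (hAub j) _)
      (mul_le_mul_right (((bergNormSq_mono φ μ (m k) (hmono hjk)).trans (hAub2 k)).trans
        (ENNReal.inv_le_inv.mpr (tsub_le_tsub_left (hδanti hjk) L))) _)) _
  have hKδto : Filter.Tendsto (fun j => (bergKernel (Ωj j) φ μ z - δ j)⁻¹)
      Filter.atTop (nhds L⁻¹) := by
    refine ENNReal.tendsto_inv_iff.mpr ?_
    have h := ENNReal.Tendsto.sub htend hδto (Or.inl hLt)
    rwa [tsub_zero] at h
  have hLδto : Filter.Tendsto (fun j => (L - δ j)⁻¹) Filter.atTop (nhds L⁻¹) := by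
    refine ENNReal.tendsto_inv_iff.mpr ?_
    have h := ENNReal.Tendsto.sub (tendsto_const_nhds (x := L)) hδto (Or.inl hLt)
    rwa [tsub_zero] at h
  have hKinvto : Filter.Tendsto (fun j => (bergKernel (Ωj j) φ μ z)⁻¹)
      Filter.atTop (nhds L⁻¹) := ENNReal.tendsto_inv_iff.mpr htend
  have hLinvt : L⁻¹ ≠ ⊤ := ENNReal.inv_ne_top.mpr hL0
  have hepsto : Filter.Tendsto eps Filter.atTop (nhds 0) := by
    have h1 := ENNReal.Tendsto.const_mul (a := (2:ℝ≥0∞)⁻¹) hKδto (Or.inr h2invt)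
    have h2 := ENNReal.Tendsto.const_mul (a := (2:ℝ≥0∞)⁻¹) hLδto (Or.inr h2invt)
    have h3 := ENNReal.Tendsto.sub (h1.add h2) hKinvto
      (Or.inr hLinvt)
    have h4 : 2⁻¹ * L⁻¹ + 2⁻¹ * L⁻¹ - L⁻¹ = 0 := by
      rw [← add_mul, ENNReal.inv_two_add_inv_two, one_mul, tsub_self]
    rwa [h4] at h3
  -- quantitative uniform Cauchy estimates on compact subsets
  have hquant : ∀ (N : ℕ) (T : Set (Fin n → ℂ)), IsCompact T → T ⊆ Ωj N →
      ∃ C : ℝ≥0∞, C ≠ ⊤ ∧ ∀ j k, N ≤ j → N ≤ k → ∀ w ∈ T,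
        ENNReal.ofReal (‖m j w - m k w‖^2) ≤ 4 * (C * eps (min j k)) := by
    intro N T hT hTN
    obtain ⟨C, hCt, hC⟩ := eval_le_const μ hac hlb hφm hφb hT (hopen N) hTN (hsub N)
    refine ⟨C, hCt, ?_⟩
    intro j k hj hk w hw
    have hdiffj : DifferentiableOn ℂ (m j) (Ωj N) := (hmdiff j).mono (hmono hj)
    have hdiffk : DifferentiableOn ℂ (m k) (Ωj N) := (hmdiff k).mono (hmono hk)
    have hdiff : DifferentiableOn ℂ ((2:ℂ)⁻¹ • (m j - m k)) (Ωj N) :=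
      (hdiffj.sub hdiffk).const_smul ((2:ℂ)⁻¹)
    have h1 := hC _ hdiff w hw
    have h2 : bergNormSq (Ωj N) φ μ ((2:ℂ)⁻¹ • (m j - m k)) ≤ eps (min j k) := by
      refine le_trans (bergNormSq_mono φ μ _ (hmono (le_min hj hk))) ?_
      rcases le_total j k with hjk | hkj
      · rw [min_eq_left hjk]
        exact hpar2 j k hjk
      · rw [min_eq_right hkj]
        have hneg : (2:ℂ)⁻¹ • (m j - m k) = -((2:ℂ)⁻¹ • (m k - m j)) := by
          rw [← smul_neg, neg_sub]
        rw [hneg, bergNormSq_neg]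
        exact hpar2 k j hkj
    have h3 : ENNReal.ofReal (‖m j w - m k w‖^2)
        = 4 * ENNReal.ofReal (‖((2:ℂ)⁻¹ • (m j - m k)) w‖^2) := by
      have hnorm : ‖((2:ℂ)⁻¹ • (m j - m k)) w‖ = 2⁻¹ * ‖m j w - m k w‖ := by
        simp only [Pi.smul_apply, Pi.sub_apply, norm_smul]
        congr 1
        rw [norm_inv]
        norm_num
      rw [hnorm, show (4:ℝ≥0∞) = ENNReal.ofReal 4 by norm_num,
        ← ENNReal.ofReal_mul (by norm_num)]
      congr 1
      ring
    rw [h3]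
    exact mul_le_mul_right (h1.trans (mul_le_mul_right h2 C)) 4
  -- uniform smallness
  have hsmall : ∀ (N : ℕ) (T : Set (Fin n → ℂ)), IsCompact T → T ⊆ Ωj N →
      ∀ ε : ℝ, 0 < ε → ∃ J, N ≤ J ∧ ∀ j k, J ≤ j → J ≤ k → ∀ w ∈ T,
        dist (m j w) (m k w) < ε := by
    intro N T hT hTN ε hε
    obtain ⟨C, hCt, hC⟩ := hquant N T hT hTN
    have h4C : Filter.Tendsto (fun i => 4 * (C * eps i)) Filter.atTop (nhds 0) := by
      have h1 := ENNReal.Tendsto.const_mul (a := C) hepsto (Or.inr hCt)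
      have h2 := ENNReal.Tendsto.const_mul (a := (4:ℝ≥0∞)) h1
        (Or.inr (by norm_num : (4:ℝ≥0∞) ≠ ⊤))
      simpa using h2
    have hev : ∀ᶠ i in Filter.atTop, 4 * (C * eps i) < ENNReal.ofReal (ε^2) :=
      h4C.eventually_lt_const (ENNReal.ofReal_pos.mpr (by positivity))
    obtain ⟨J₀, hJ₀⟩ := Filter.eventually_atTop.mp hev
    refine ⟨max N J₀, le_max_left _ _, ?_⟩
    intro j k hj hk w hw
    have hjN : N ≤ j := (le_max_left _ _).trans hj
    have hkN : N ≤ k := (le_max_left _ _).trans hk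
    have h1 := hC j k hjN hkN w hw
    have h2 : 4 * (C * eps (min j k)) < ENNReal.ofReal (ε^2) :=
      hJ₀ _ (le_min ((le_max_right _ _).trans hj) ((le_max_right _ _).trans hk))
    have h3 : ENNReal.ofReal (‖m j w - m k w‖^2) < ENNReal.ofReal (ε^2) :=
      lt_of_le_of_lt h1 h2
    rw [ENNReal.ofReal_lt_ofReal_iff (by positivity)] at h3
    rw [dist_eq_norm]
    exact lt_of_pow_lt_pow_left₀ 2 hε.le h3
  -- pointwise limits
  have hmem : ∀ w, w ∈ Ω → ∃ N, w ∈ Ωj N := by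
    intro w hw
    rw [← hunion] at hw
    exact mem_iUnion.mp hw
  have hcauchy : ∀ w ∈ Ω, CauchySeq (fun j => m j w) := by
    intro w hw
    obtain ⟨N, hN⟩ := hmem w hw
    rw [Metric.cauchySeq_iff]
    intro ε hε
    obtain ⟨J, hJN, hJ⟩ := hsmall N {w} isCompact_singleton (singleton_subset_iff.mpr hN) ε hε
    exact ⟨J, fun j hj k hk => hJ j k hj hk w rfl⟩
  set G : (Fin n → ℂ) → ℂ := fun w => Filter.limUnder Filter.atTop (fun j => m j w) with hGdef
  have hGlim : ∀ w ∈ Ω, Filter.Tendsto (fun j => m j w) Filter.atTop (nhds (G w)) :=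
    fun w hw => (hcauchy w hw).tendsto_limUnder
  have hGz : G z = 1 := by
    have h1 := hGlim z (hsub 0 hz)
    have h2 : Filter.Tendsto (fun j => m j z) Filter.atTop (nhds 1) := by
      simp only [hmz]
      exact tendsto_const_nhds
    exact tendsto_nhds_unique h1 h2
  -- holomorphy of the limit
  have hGdiff : DifferentiableOn ℂ G Ω := by
    intro x₀ hx₀
    suffices h : DifferentiableAt ℂ G x₀ from h.differentiableWithinAt
    obtain ⟨N, hN⟩ := hmem x₀ hx₀
    obtain ⟨ρ, hρ0, hρsub⟩ : ∃ ρ : ℝ, 0 < ρ ∧ Metric.closedBall x₀ (2*ρ) ⊆ Ωj N := by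
      obtain ⟨ε, hε0, hεsub⟩ := Metric.isOpen_iff.mp (hopen N) x₀ hN
      refine ⟨ε/4, by positivity, ?_⟩
      refine subset_trans (Metric.closedBall_subset_ball ?_) hεsub
      linarith
    have hballN : Metric.ball x₀ ρ ⊆ Ωj N := by
      refine subset_trans (Metric.ball_subset_closedBall.trans
        (Metric.closedBall_subset_closedBall (by linarith))) hρsub
    set Fse : ℕ → (Fin n → ℂ) → ℂ := fun i => m (i + N) with hFsedef
    have hFsediff : ∀ i, DifferentiableOn ℂ (Fse i) (Ωj N) :=
      fun i => (hmdiff (i + N)).mono (hmono (Nat.le_add_left N i))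
    have hasF : ∀ i, ∀ y ∈ Metric.ball x₀ ρ, HasFDerivAt (Fse i) (fderiv ℂ (Fse i) y) y := by
      intro i y hy
      have hyN : y ∈ Ωj N := hballN hy
      exact (((hFsediff i) y hyN).differentiableAt ((hopen N).mem_nhds hyN)).hasFDerivAt
    have hUC : UniformCauchySeqOn (fun i => fderiv ℂ (Fse i)) Filter.atTop
        (Metric.ball x₀ ρ) := by
      rw [Metric.uniformCauchySeqOn_iff]
      intro ε hε
      have hε' : 0 < (ε * ρ) / (2 * (n+1)) := by positivity
      obtain ⟨J, hJN, hJ⟩ := hsmall N (Metric.closedBall x₀ (2*ρ))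
        (isCompact_closedBall _ _) hρsub _ hε'
      refine ⟨J, fun a ha b hb y hy => ?_⟩
      have hyN : y ∈ Ωj N := hballN hy
      have hda : DifferentiableAt ℂ (Fse a) y :=
        ((hFsediff a) y hyN).differentiableAt ((hopen N).mem_nhds hyN)
      have hdb : DifferentiableAt ℂ (Fse b) y :=
        ((hFsediff b) y hyN).differentiableAt ((hopen N).mem_nhds hyN)
      have hdDiff : DifferentiableOn ℂ (fun w => Fse a w - Fse b w) (Ωj N) :=
        (hFsediff a).sub (hFsediff b)
      have hdbnd : ∀ x ∈ Metric.closedBall x₀ (2*ρ),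
          ‖Fse a x - Fse b x‖ ≤ (ε * ρ) / (2 * (n+1)) := by
        intro x hx
        have := hJ (a + N) (b + N) (le_trans ha (Nat.le_add_right a N))
          (le_trans hb (Nat.le_add_right b N)) x hx
        rw [dist_eq_norm] at this
        exact this.le
      have hfb := fderiv_diff_bound (hopen N) hdDiff hρ0 hρsub hε'.le hdbnd y hy
      rw [dist_eq_norm, ← fderiv_sub hda hdb]
      refine lt_of_le_of_lt hfb ?_
      have hq : ((ε * ρ) / (2 * (n+1))) / ρ = ε / (2 * (n+1)) := by
        field_simp
      rw [hq]
      have hn0 : (0:ℝ) ≤ (n:ℝ) := Nat.cast_nonneg n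
      have h2n : (0:ℝ) < 2 * ((n:ℝ)+1) := by positivity
      calc (n:ℝ) * (ε / (2 * ((n:ℝ)+1))) = ((n:ℝ) * ε) / (2 * ((n:ℝ)+1)) := by ring
        _ < ε := by
          rw [div_lt_iff₀ h2n]
          nlinarith
    have hptCauchy : ∀ y ∈ Metric.ball x₀ ρ, CauchySeq (fun i => fderiv ℂ (Fse i) y) := by
      intro y hy
      rw [Metric.cauchySeq_iff]
      intro ε hε
      obtain ⟨NN, hNN⟩ := Metric.uniformCauchySeqOn_iff.mp hUC ε hε
      exact ⟨NN, fun a ha b hb => hNN a ha b hb y hy⟩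
    set G' : (Fin n → ℂ) → ((Fin n → ℂ) →L[ℂ] ℂ) :=
      fun y => Filter.limUnder Filter.atTop (fun i => fderiv ℂ (Fse i) y) with hG'def
    have hTU : TendstoUniformlyOn (fun i => fderiv ℂ (Fse i)) G' Filter.atTop
        (Metric.ball x₀ ρ) :=
      hUC.tendstoUniformlyOn_of_tendsto (fun y hy => (hptCauchy y hy).tendsto_limUnder)
    have hpt : ∀ y ∈ Metric.ball x₀ ρ, Filter.Tendsto (fun i => Fse i y)
        Filter.atTop (nhds (G y)) := by
      intro y hy
      have hyΩ : y ∈ Ω := hsub N (hballN hy)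
      exact (hGlim y hyΩ).comp (Filter.tendsto_add_atTop_nat N)
    have hmain := hasFDerivAt_of_tendstoUniformlyOn Metric.isOpen_ball hTU
      (fun i y hy => hasF i y hy) hpt (Metric.mem_ball_self hρ0)
    exact hmain.differentiableAt
  -- Fatou
  have hGnorm : bergNormSq Ω φ μ G ≤ L⁻¹ := by
    set H : ℕ → (Fin n → ℂ) → ℝ≥0∞ := fun j => (Ωj j).indicator
      (fun w => ENNReal.ofReal (‖m j w‖^2 * Real.exp (-(φ w)))) with hHdef
    have hHmeas : ∀ j, AEMeasurable (H j) (μ.restrict Ω) := by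
      intro j
      refine (aemeasurable_indicator_iff (hopen j).measurableSet).mpr ?_
      rw [Measure.restrict_restrict (hopen j).measurableSet,
        inter_eq_self_of_subset_left (hsub j)]
      exact berg_integrand_aemeas (hopen j).measurableSet (hmdiff j).continuousOn hφm μ
    have hHint : ∀ j, (∫⁻ w in Ω, H j w ∂μ) = bergNormSq (Ωj j) φ μ (m j) := by
      intro j
      rw [hHdef]
      rw [lintegral_indicator (hopen j).measurableSet]
      rw [Measure.restrict_restrict (hopen j).measurableSet,
        inter_eq_self_of_subset_left (hsub j)]
      rfl
    have hlim : ∀ w ∈ Ω, Filter.Tendsto (fun j => H j w) Filter.atTop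
        (nhds (ENNReal.ofReal (‖G w‖^2 * Real.exp (-(φ w))))) := by
      intro w hw
      obtain ⟨N, hN⟩ := hmem w hw
      have hev : ∀ᶠ j in Filter.atTop,
          H j w = ENNReal.ofReal (‖m j w‖^2 * Real.exp (-(φ w))) :=
        Filter.eventually_atTop.mpr ⟨N, fun j hj => indicator_of_mem (hmono hj hN) _⟩
      rw [Filter.tendsto_congr' hev]
      have h1 : Filter.Tendsto (fun j => m j w) Filter.atTop (nhds (G w)) := hGlim w hw
      have h2 : Continuous (fun u : ℂ => ENNReal.ofReal (‖u‖^2 * Real.exp (-(φ w)))) := by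
        refine ENNReal.continuous_ofReal.comp ?_
        exact ((continuous_norm.pow 2).mul continuous_const)
      exact (h2.tendsto (G w)).comp h1
    have hfatou : bergNormSq Ω φ μ G
        ≤ Filter.liminf (fun j => ∫⁻ w in Ω, H j w ∂μ) Filter.atTop := by
      refine le_trans (le_of_eq ?_) (lintegral_liminf_le' hHmeas)
      refine lintegral_congr_ae ?_
      filter_upwards [ae_restrict_mem hΩ.measurableSet] with w hw
      rw [(hlim w hw).liminf_eq]
    refine hfatou.trans ?_
    have heq : (fun j => ∫⁻ w in Ω, H j w ∂μ) = fun j => bergNormSq (Ωj j) φ μ (m j) :=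
      funext hHint
    rw [heq]
    refine le_trans (Filter.liminf_le_liminf (Filter.Eventually.of_forall
      (fun j => hAub j))) ?_
    rw [hKδto.liminf_eq]
  -- conclusion
  have hGN0 : bergNormSq Ω φ μ G ≠ 0 := by
    intro h0
    have h := eval_zero_of_normSq_zero μ hac hlb hφb hΩ (subset_refl Ω)
      hGdiff.continuousOn (hsub 0 hz) h0
    rw [hGz] at h
    exact one_ne_zero h
  have hGNt : bergNormSq Ω φ μ G ≠ ⊤ := ne_top_of_le_ne_top hLinvt hGnorm
  have hfin := div_le_kernel (z := z) hGdiff hGN0 hGNt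
  rw [hGz] at hfin
  simp only [norm_one, one_pow, ENNReal.ofReal_one] at hfin
  refine le_trans ?_ hfin
  rw [ENNReal.le_div_iff_mul_le (Or.inl hGN0) (Or.inl hGNt)]
  calc L * bergNormSq Ω φ μ G ≤ L * L⁻¹ := mul_le_mul_right hGnorm L
    _ = 1 := ENNReal.mul_inv_cancel hL0 hLt
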